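/- arXiv:1002.2357 — 3 statements merged into one kernel-verified Lean document; each statement's English description precedes it below -/
import Mathlib

section
/- Let E be a set and 𝒞 a collection of pairwise incomparable (under inclusion) finite subsets of E. Suppose that for every modular pair A, B ∈ 𝒞 (i.e., the interval below A ∪ B in the lattice of unions of members of 𝒞 has length 2) and every e ∈ A ∩ B, there exists C ∈ 𝒞 with C ⊆ (A ∪ B) \ {e}. Then for EVERY pair A, B ∈ 𝒞 with A ≠ B and every e ∈ A ∩ B, there exists C ∈ 𝒞 with C ⊆ (A ∪ B) \ {e}. -/
open Set

variable {α : Type*}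

/-- The set `U(𝒞)` of all unions of subfamilies of `𝒞`, as a set of sets
(ordered by inclusion). -/
def unionsOf (𝒞 : Set (Set α)) : Set (Set α) := {Z | ∃ 𝒯 ⊆ 𝒞, Z = ⋃₀ 𝒯}

/-- There is a strictly increasing chain of `n + 1` elements of `U`,
all contained in `Z` (i.e. a chain of length `n` in `U_{≤ Z}`). -/
def HasChainBelow (U : Set (Set α)) (Z : Set α) (n : ℕ) : Prop :=
  ∃ c : Fin (n + 1) → Set α, StrictMono c ∧ ∀ i, c i ∈ U ∧ c i ⊆ Z

/-- The maximal length of a chain in `U_{≤ Z}` is exactly `n`. -/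
def LengthBelowEq (U : Set (Set α)) (Z : Set α) (n : ℕ) : Prop :=
  HasChainBelow U Z n ∧ ¬ HasChainBelow U Z (n + 1)

/-- `A, B ∈ 𝒞` are a modular pair: the interval below `A ∪ B` in the lattice
`U(𝒞)` of unions of members of `𝒞` has length `2`. -/
def IsModularPair (𝒞 : Set (Set α)) (A B : Set α) : Prop :=
  LengthBelowEq (unionsOf 𝒞) (A ∪ B) 2

/-- The elimination property `ℰ(A, B, 𝒞)`. -/
def Elim (𝒞 : Set (Set α)) (A B : Set α) : Prop :=
  ∀ e ∈ A ∩ B, ∃ C ∈ 𝒞, C ⊆ (A ∪ B) \ {e}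

/-- The members of `𝒞` are pairwise incomparable under inclusion. -/
def PairwiseIncomparable (𝒞 : Set (Set α)) : Prop :=
  ∀ A ∈ 𝒞, ∀ B ∈ 𝒞, A ⊆ B → A = B

/-!
Induct on `|A ∪ B|`. If elimination fails for `A, B` at `e`, then every member of `𝒞` inside
`A ∪ B` contains `e`, and by induction no two distinct members have a union strictly inside
`A ∪ B` (elimination for them would produce a member avoiding `e`). A chain
`c₀ < c₁ < c₂ < c₃` below `A ∪ B` in `U(𝒞)` would yield such a pair: a member inside `c₁` and a
member inside `c₂` but not `c₁`. Hence `A, B` is a modular pair, and modular elimination applies.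
-/

section

variable {𝒞 : Set (Set α)}

theorem empty_mem_unionsOf : (∅ : Set α) ∈ unionsOf 𝒞 :=
  ⟨∅, empty_subset _, sUnion_empty.symm⟩

theorem mem_unionsOf_of_mem {A : Set α} (hA : A ∈ 𝒞) : A ∈ unionsOf 𝒞 :=
  ⟨{A}, singleton_subset_iff.2 hA, sUnion_singleton A |>.symm⟩

theorem union_mem_unionsOf {X Y : Set α} (hX : X ∈ unionsOf 𝒞) (hY : Y ∈ unionsOf 𝒞) :
    X ∪ Y ∈ unionsOf 𝒞 := by
  obtain ⟨𝒯, h𝒯, rfl⟩ := hX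
  obtain ⟨𝒮, h𝒮, rfl⟩ := hY
  exact ⟨𝒯 ∪ 𝒮, union_subset h𝒯 h𝒮, (sUnion_union 𝒯 𝒮).symm⟩

theorem exists_mem_subset_of_mem_unionsOf {X : Set α} {x : α} (hX : X ∈ unionsOf 𝒞)
    (hx : x ∈ X) : ∃ D ∈ 𝒞, x ∈ D ∧ D ⊆ X := by
  obtain ⟨𝒯, h𝒯, rfl⟩ := hX
  obtain ⟨D, hD, hxD⟩ := hx
  exact ⟨D, h𝒯 hD, hxD, subset_sUnion_of_mem hD⟩

theorem hasChainBelow_two {U : Set (Set α)} {Z X Y W : Set α} (hXY : X ⊂ Y) (hYW : Y ⊂ W)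
    (hX : X ∈ U) (hY : Y ∈ U) (hW : W ∈ U) (hWZ : W ⊆ Z) : HasChainBelow U Z 2 := by
  refine ⟨![X, Y, W], Fin.strictMono_iff_lt_succ.2 ?_, ?_⟩
  · simpa [Fin.forall_fin_two] using ⟨hXY, hYW⟩
  · simpa [Fin.forall_fin_succ] using
      ⟨⟨hX, hXY.subset.trans (hYW.subset.trans hWZ)⟩, ⟨hY, hYW.subset.trans hWZ⟩, hW, hWZ⟩

theorem hasChainBelow_two_union {A B : Set α} (hA : A ∈ 𝒞) (hB : B ∈ 𝒞) (hAB : A ≠ B)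
    (hA₀ : A.Nonempty) (hB₀ : B.Nonempty) : HasChainBelow (unionsOf 𝒞) (A ∪ B) 2 := by
  wlog hA_ssubset : A ⊂ A ∪ B generalizing A B
  · have hBA : B ⊆ A := not_not.1 (hA_ssubset ∘ ssubset_union_left_iff.2)
    have hB_ssubset : B ⊂ B ∪ A := ssubset_union_left_iff.2 fun hAB' => hAB (hAB'.antisymm hBA)
    simpa only [union_comm] using this hB hA hAB.symm hB₀ hA₀ hB_ssubset
  exact hasChainBelow_two hA₀.empty_ssubset hA_ssubset empty_mem_unionsOf
    (mem_unionsOf_of_mem hA)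
    (union_mem_unionsOf (mem_unionsOf_of_mem hA) (mem_unionsOf_of_mem hB)) subset_rfl

theorem exists_ne_union_ssubset_of_hasChainBelow_three {Z : Set α}
    (h : HasChainBelow (unionsOf 𝒞) Z 3) : ∃ D ∈ 𝒞, ∃ D' ∈ 𝒞, D ≠ D' ∧ D ∪ D' ⊂ Z := by
  obtain ⟨c, hc, hcU⟩ := h
  have h01 : c 0 ⊂ c 1 := hc (by decide : (0 : Fin 4) < 1)
  have h12 : c 1 ⊂ c 2 := hc (by decide : (1 : Fin 4) < 2)
  have h23 : c 2 ⊂ c 3 := hc (by decide : (2 : Fin 4) < 3)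
  obtain ⟨x, hx, -⟩ := exists_of_ssubset h01
  obtain ⟨D, hD, -, hDc⟩ := exists_mem_subset_of_mem_unionsOf (hcU 1).1 hx
  obtain ⟨y, hy, hyc⟩ := exists_of_ssubset h12
  obtain ⟨D', hD', hyD', hD'c⟩ := exists_mem_subset_of_mem_unionsOf (hcU 2).1 hy
  refine ⟨D, hD, D', hD', fun h => hyc (hDc (h ▸ hyD')), ?_⟩
  exact (union_subset (hDc.trans h12.subset) hD'c).trans_ssubset (h23.trans_subset (hcU 3).2)

theorem isModularPair_of_not_exists_subset_diff {A B : Set α} {e : α} (hA : A ∈ 𝒞) (hB : B ∈ 𝒞)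
    (hAB : A ≠ B) (he : e ∈ A ∩ B)
    (hsmall : ∀ P ∈ 𝒞, ∀ Q ∈ 𝒞, P ≠ Q → P ∪ Q ⊂ A ∪ B → Elim 𝒞 P Q)
    (hno : ∀ C ∈ 𝒞, ¬ C ⊆ (A ∪ B) \ {e}) : IsModularPair 𝒞 A B := by
  have he_mem : ∀ D ∈ 𝒞, D ⊆ A ∪ B → e ∈ D := fun D hD hDAB => by
    by_contra heD
    exact hno D hD (subset_sdiff_singleton hDAB heD)
  refine ⟨hasChainBelow_two_union hA hB hAB ⟨e, he.1⟩ ⟨e, he.2⟩, fun h3 => ?_⟩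
  obtain ⟨D, hD, D', hD', hDD', hss⟩ := exists_ne_union_ssubset_of_hasChainBelow_three h3
  obtain ⟨C, hC, hCsub⟩ := hsmall D hD D' hD' hDD' hss e
    ⟨he_mem D hD (subset_union_left.trans hss.subset),
      he_mem D' hD' (subset_union_right.trans hss.subset)⟩
  exact hno C hC (hCsub.trans (sdiff_subset_sdiff_left hss.subset))

end

theorem elim_of_modular_elim_general (𝒞 : Set (Set α))
    (hfin : ∀ C ∈ 𝒞, C.Finite)
    (hmod : ∀ A ∈ 𝒞, ∀ B ∈ 𝒞, IsModularPair 𝒞 A B → Elim 𝒞 A B) :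
    ∀ A ∈ 𝒞, ∀ B ∈ 𝒞, A ≠ B → Elim 𝒞 A B := by
  suffices ∀ n, ∀ A ∈ 𝒞, ∀ B ∈ 𝒞, A ≠ B → (A ∪ B).ncard = n → Elim 𝒞 A B from
    fun A hA B hB hAB => this _ A hA B hB hAB rfl
  intro n
  induction n using Nat.strong_induction_on with
  | _ n ih =>
  rintro A hA B hB hAB rfl e he
  by_contra! hno
  have hsmall : ∀ P ∈ 𝒞, ∀ Q ∈ 𝒞, P ≠ Q → P ∪ Q ⊂ A ∪ B → Elim 𝒞 P Q :=
    fun P hP Q hQ hPQ hss =>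
      ih _ (ncard_lt_ncard hss ((hfin A hA).union (hfin B hB))) P hP Q hQ hPQ rfl
  obtain ⟨C, hC, hCe⟩ :=
    hmod A hA B hB (isModularPair_of_not_exists_subset_diff hA hB hAB he hsmall hno) e he
  exact hno C hC hCe

/-- **Theorem (modular elimination suffices).** If the elimination property
holds for all modular pairs of a pairwise incomparable family of finite sets,
then it holds for all pairs. -/
theorem elim_of_modular_elim (𝒞 : Set (Set α))
    (hfin : ∀ C ∈ 𝒞, C.Finite)
    (hinc : PairwiseIncomparable 𝒞)
    (hmod : ∀ A ∈ 𝒞, ∀ B ∈ 𝒞, IsModularPair 𝒞 A B → Elim 𝒞 A B) :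
    ∀ A ∈ 𝒞, ∀ B ∈ 𝒞, A ≠ B → Elim 𝒞 A B :=
  elim_of_modular_elim_general 𝒞 hfin hmod
end

section
/- For signed subsets X, Y of E, the oriented elimination property 𝒪ℰ(X, Y, 𝔠) implies the (unsigned) elimination property ℰ(supp(X), supp(Y), 𝒞), where 𝒞 = {supp(W) : W ∈ 𝔠}, provided 𝔠 is ℤ₂-invariant and simple and supp(X) ≠ supp(Y). -/
open Set

variable {α : Type*}

/-- The support of a signed subset `X : α → SignType`. -/
def sSupp (X : α → SignType) : Set α := {e | X e ≠ 0}

/-- `𝔠` is invariant under the `ℤ₂`-action of switching signs. -/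
def Z2Invariant (𝔠 : Set (α → SignType)) : Prop :=
  ∀ X ∈ 𝔠, (fun e => -(X e)) ∈ 𝔠

/-- `𝔠` is simple: equal supports force equality up to global sign. -/
def SimpleFam (𝔠 : Set (α → SignType)) : Prop :=
  ∀ X ∈ 𝔠, ∀ Y ∈ 𝔠, sSupp X = sSupp Y → X = Y ∨ X = fun e => -(Y e)

/-- The oriented elimination property `𝒪ℰ(X, Y, 𝔠)`. -/
def OElim (𝔠 : Set (α → SignType)) (X Y : α → SignType) : Prop :=
  ∀ e f : α, X e = -(Y e) → X e ≠ 0 → X f ≠ Y f →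
    ∃ Z ∈ 𝔠, Z e = 0 ∧ Z f ≠ 0 ∧ ∀ g : α, Z g = 0 ∨ Z g = X g ∨ Z g = Y g

lemma SignType.eq_neg_or_eq_of_ne_zero {a b : SignType} (ha : a ≠ 0) (hb : b ≠ 0) :
    a = -b ∨ a = b := by
  cases a <;> cases b <;> simp_all

lemma sSupp_neg (Y : α → SignType) : sSupp (fun e => -(Y e)) = sSupp Y := by
  ext e
  simp [sSupp]

lemma exists_ne_and_ne_neg_of_sSupp_ne {X Y : α → SignType} (h : sSupp X ≠ sSupp Y) :
    ∃ f, X f ≠ Y f ∧ X f ≠ -(Y f) := by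
  obtain ⟨f, hf⟩ : ∃ f, ¬(X f ≠ 0 ↔ Y f ≠ 0) := by
    by_contra! hall
    exact h (Set.ext hall)
  exact ⟨f, fun hXY => hf (by rw [hXY]), fun hXY => hf (by rw [hXY]; simp)⟩

lemma sSupp_subset_union_of_conformal {X Y Z : α → SignType}
    (hZ : ∀ g, Z g = 0 ∨ Z g = X g ∨ Z g = Y g) : sSupp Z ⊆ sSupp X ∪ sSupp Y := by
  intro g hg
  rcases hZ g with h | h | h
  · exact absurd h hg
  · exact Or.inl fun hX => hg (h.trans hX)
  · exact Or.inr fun hY => hg (h.trans hY)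

lemma OElim.exists_sSupp_subset_diff {𝔠 : Set (α → SignType)} {X Y : α → SignType}
    (hOE : OElim 𝔠 X Y) {e f : α} (he : X e = -(Y e)) (heX : X e ≠ 0) (hf : X f ≠ Y f) :
    ∃ Z ∈ 𝔠, sSupp Z ⊆ (sSupp X ∪ sSupp Y) \ {e} := by
  obtain ⟨Z, hZ, hZe, -, hconf⟩ := hOE e f he heX hf
  refine ⟨Z, hZ, fun g hg => ⟨sSupp_subset_union_of_conformal hconf hg, ?_⟩⟩
  rintro rfl
  exact hg hZe

theorem elim_of_oelim_general (𝔠 : Set (α → SignType))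
    (X Y : α → SignType)
    (hne : sSupp X ≠ sSupp Y)
    (hOE : OElim 𝔠 X Y) (hOE' : OElim 𝔠 X (fun e => -(Y e))) :
    Elim {S | ∃ W ∈ 𝔠, S = sSupp W} (sSupp X) (sSupp Y) := by
  intro e ⟨heX, heY⟩
  obtain ⟨f, hfY, hfY'⟩ := exists_ne_and_ne_neg_of_sSupp_ne hne
  rcases SignType.eq_neg_or_eq_of_ne_zero heX heY with he | he
  · obtain ⟨Z, hZ, hsub⟩ := hOE.exists_sSupp_subset_diff he heX hfY
    exact ⟨sSupp Z, ⟨Z, hZ, rfl⟩, hsub⟩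
  · obtain ⟨Z, hZ, hsub⟩ := hOE'.exists_sSupp_subset_diff (by simpa using he) heX hfY'
    exact ⟨sSupp Z, ⟨Z, hZ, rfl⟩, sSupp_neg Y ▸ hsub⟩

/-- **Oriented elimination implies unsigned elimination.** If `𝔠` is
`ℤ₂`-invariant and simple, the supports of `X` and `Y` are distinct and
incomparable, and oriented elimination holds between `X` and `Y` (and hence,
replacing `Y` by `-Y`, between `X` and `-Y`), then the unsigned elimination
property holds between `supp X` and `supp Y` in the family of supports. -/
theorem elim_of_oelim (𝔠 : Set (α → SignType))
    (hZ2 : Z2Invariant 𝔠) (hsimple : SimpleFam 𝔠)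
    (X Y : α → SignType) (hX : X ∈ 𝔠) (hY : Y ∈ 𝔠)
    (hne : sSupp X ≠ sSupp Y)
    (hincXY : ¬ sSupp X ⊆ sSupp Y) (hincYX : ¬ sSupp Y ⊆ sSupp X)
    (hOE : OElim 𝔠 X Y) (hOE' : OElim 𝔠 X (fun e => -(Y e))) :
    Elim {S | ∃ W ∈ 𝔠, S = sSupp W} (sSupp X) (sSupp Y) :=
  elim_of_oelim_general 𝔠 X Y hne hOE hOE'
end

section
/- Let 𝒞 be a collection of pairwise incomparable finite subsets of a (possibly infinite) set E such that ℰ(A, B, 𝒞) holds for all modular pairs A, B ∈ 𝒞. Then 𝒞 satisfies the circuit axioms of a finitary matroid: its members are incomparable finite sets and the full elimination property ℰ(A, B, 𝒞) holds for all pairs A, B ∈ 𝒞. -/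
/-!
Induct on `|A ∪ B|`. If elimination fails for `A, B` at `e`, every member of `𝒞` inside `A ∪ B`
contains `e`, so by induction any two distinct such members already have union `A ∪ B`. Then a
nonempty union of members below `A ∪ B` is either a single member or all of `A ∪ B`, so the
interval below `A ∪ B` in `U(𝒞)` has length `2` and the pair is modular after all.
-/

open Set

variable {α : Type*}

variable {𝒞 : Set (Set α)}

lemma sUnion_mem_unionsOf {𝒯 : Set (Set α)} (h𝒯 : 𝒯 ⊆ 𝒞) : ⋃₀ 𝒯 ∈ unionsOf 𝒞 :=
  ⟨𝒯, h𝒯, rfl⟩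

section UnionEq

variable {Z : Set α} (h : ∀ C ∈ 𝒞, ∀ D ∈ 𝒞, C ⊆ Z → D ⊆ Z → C ≠ D → C ∪ D = Z)
include h

lemma eq_of_nonempty_of_ssubset_of_forall_union_eq {X Y : Set α} (hX : X ∈ unionsOf 𝒞)
    (hY : Y ∈ unionsOf 𝒞) (hXne : X.Nonempty) (hXY : X ⊂ Y) (hYZ : Y ⊆ Z) : Y = Z := by
  obtain ⟨𝒮, h𝒮, rfl⟩ := hX
  obtain ⟨𝒯, h𝒯, rfl⟩ := hY
  obtain ⟨x, S, hS, -⟩ := hXne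
  have hSX : S ⊆ ⋃₀ 𝒮 := subset_sUnion_of_mem hS
  obtain ⟨T, hT, hTX⟩ : ∃ T ∈ 𝒯, ¬ T ⊆ ⋃₀ 𝒮 := by
    simpa only [sUnion_subset_iff, not_forall, exists_prop] using hXY.not_subset
  have hTY : T ⊆ ⋃₀ 𝒯 := subset_sUnion_of_mem hT
  have hST : S ∪ T = Z := h S (h𝒮 hS) T (h𝒯 hT) (hSX.trans (hXY.subset.trans hYZ))
    (hTY.trans hYZ) (fun hST => hTX (hST ▸ hSX))
  exact hYZ.antisymm (hST ▸ union_subset (hSX.trans hXY.subset) hTY)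

lemma not_hasChainBelow_three_of_forall_union_eq : ¬ HasChainBelow (unionsOf 𝒞) Z 3 := by
  rintro ⟨c, hc, hcU⟩
  have h01 : c 0 ⊂ c 1 := hc (show (0 : Fin 4) < 1 by decide)
  have h12 : c 1 ⊂ c 2 := hc (show (1 : Fin 4) < 2 by decide)
  have h23 : c 2 ⊂ c 3 := hc (show (2 : Fin 4) < 3 by decide)
  have hc2 : c 2 = Z := eq_of_nonempty_of_ssubset_of_forall_union_eq h (hcU 1).1 (hcU 2).1
    (nonempty_of_ssubset' h01) h12 (hcU 2).2
  exact h23.not_subset (hc2 ▸ (hcU 3).2)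

end UnionEq

lemma isModularPair_of_forall_union_eq (hinc : PairwiseIncomparable 𝒞) {A B : Set α}
    (hA : A ∈ 𝒞) (hB : B ∈ 𝒞) (hne : A ≠ B)
    (h : ∀ C ∈ 𝒞, ∀ D ∈ 𝒞, C ⊆ A ∪ B → D ⊆ A ∪ B → C ≠ D → C ∪ D = A ∪ B) :
    IsModularPair 𝒞 A B := by
  have hAne : A.Nonempty := nonempty_iff_ne_empty.mpr fun hA₀ =>
    hne (hinc A hA B hB (hA₀ ▸ empty_subset B))
  have hBA : ¬ B ⊆ A := fun hBA => hne (hinc B hB A hA hBA).symm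
  refine ⟨⟨![∅, A, A ∪ B], ?_, ?_⟩, not_hasChainBelow_three_of_forall_union_eq h⟩
  · rw [Fin.strictMono_iff_lt_succ]
    intro i
    fin_cases i <;> simp [hAne, hBA]
  · intro i
    fin_cases i
    · simpa using sUnion_mem_unionsOf (empty_subset 𝒞)
    · simpa using sUnion_mem_unionsOf (singleton_subset_iff.mpr hA)
    · simpa using sUnion_mem_unionsOf (pair_subset hA hB)

/-- **Corollary (finitary matroids).** A family of pairwise incomparable
finite subsets of a (possibly infinite) set satisfying elimination for all
modular pairs satisfies the full circuit axioms of a finitary matroid: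
incomparable finite members and elimination for all pairs. -/
theorem finitary_circuit_axioms_of_modular_elim (𝒞 : Set (Set α))
    (hfin : ∀ C ∈ 𝒞, C.Finite)
    (hinc : PairwiseIncomparable 𝒞)
    (hmod : ∀ A ∈ 𝒞, ∀ B ∈ 𝒞, IsModularPair 𝒞 A B → Elim 𝒞 A B) :
    PairwiseIncomparable 𝒞 ∧ (∀ C ∈ 𝒞, C.Finite) ∧
      ∀ A ∈ 𝒞, ∀ B ∈ 𝒞, A ≠ B → Elim 𝒞 A B := by
  refine ⟨hinc, hfin, fun A hA B hB hne => ?_⟩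
  induction hn : (A ∪ B).ncard using Nat.strong_induction_on generalizing A B with
  | _ n ih =>
    intro e he
    by_contra! hno
    have he_mem : ∀ C ∈ 𝒞, C ⊆ A ∪ B → e ∈ C := fun C hC hCAB =>
      by_contra fun heC => hno C hC (subset_sdiff_singleton hCAB heC)
    have hunion : ∀ C ∈ 𝒞, ∀ D ∈ 𝒞, C ⊆ A ∪ B → D ⊆ A ∪ B → C ≠ D → C ∪ D = A ∪ B := by
      intro C hC D hD hCAB hDAB hCD
      by_contra hlt
      have hss : C ∪ D ⊂ A ∪ B := (union_subset hCAB hDAB).ssubset_of_ne hlt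
      obtain ⟨W, hW, hWCD⟩ := ih _ (hn ▸ ncard_lt_ncard hss ((hfin A hA).union (hfin B hB)))
        C hC D hD hCD rfl e ⟨he_mem C hC hCAB, he_mem D hD hDAB⟩
      exact hno W hW (hWCD.trans (sdiff_subset_sdiff_left hss.subset))
    obtain ⟨W, hW, hWAB⟩ :=
      hmod A hA B hB (isModularPair_of_forall_union_eq hinc hA hB hne hunion) e he
    exact hno W hW hWAB
end
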